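/- For μ > 0 and α > 0, the function d(k) = arctanh(μ/k)/k is Lipschitz continuous on the interval [μ + α, ∞), and its Lipschitz constant M satisfies μ/(2(μ+α)²·α) ≤ M ≤ 3/((μ+α)·α). -/

import Mathlib

/-
For `k > μ`, `d'(k) = -(μ / (k (k² - μ²)) + artanh (μ / k) / k²)`. Since `0 ≤ artanh x ≤ x / (1 - x)`
on `[0, 1)`, `|d'(k)| ≤ 2 / (k (k - μ)) ≤ 2 / ((μ + α) α)` on `[μ + α, ∞)`, and the mean value
inequality gives the upper bound. Conversely, a Lipschitz constant bounds `|d'(k)| ≥ μ / (k (k² - μ²))`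
at every interior point; letting `k ↓ μ + α` gives `M ≥ μ / ((μ + α) α (2μ + α)) ≥ μ / (2 (μ + α)² α)`.
The best constant exists because the set of Lipschitz constants is closed.
-/

/-- Inverse hyperbolic tangent. -/
noncomputable def artanh (x : ℝ) : ℝ := (1 / 2) * Real.log ((1 + x) / (1 - x))

open Set Filter Topology

theorem isClosed_setOf_lipschitzOnWith_const {X Y : Type*} [PseudoMetricSpace X]
    [PseudoMetricSpace Y] (f : X → Y) (s : Set X) :
    IsClosed {M : ℝ | 0 ≤ M ∧ LipschitzOnWith M.toNNReal f s} := by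
  have hset : {M : ℝ | 0 ≤ M ∧ LipschitzOnWith M.toNNReal f s} =
      Ici 0 ∩ ⋂ x ∈ s, ⋂ y ∈ s, {M : ℝ | dist (f x) (f y) ≤ M * dist x y} := by
    ext M
    simp only [mem_ofPred_eq, mem_inter_iff, mem_Ici, mem_iInter, and_congr_right_iff]
    intro hM
    rw [lipschitzOnWith_iff_dist_le_mul, Real.coe_toNNReal _ hM]
  rw [hset]
  exact isClosed_Ici.inter <| isClosed_biInter fun x _ => isClosed_biInter fun y _ =>
    isClosed_le continuous_const (continuous_id.mul continuous_const)

theorem LipschitzOnWith.exists_isLeast_lipschitzOnWith {X Y : Type*} [PseudoMetricSpace X]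
    [PseudoMetricSpace Y] {f : X → Y} {s : Set X} {K : NNReal} (hf : LipschitzOnWith K f s) :
    ∃ M, IsLeast {M : ℝ | 0 ≤ M ∧ LipschitzOnWith M.toNNReal f s} M := by
  have hK : (K : ℝ) ∈ {M : ℝ | 0 ≤ M ∧ LipschitzOnWith M.toNNReal f s} :=
    ⟨K.2, by rwa [Real.toNNReal_coe]⟩
  exact ⟨_, (isClosed_setOf_lipschitzOnWith_const f s).csInf_mem ⟨_, hK⟩ ⟨0, fun _ h => h.1⟩,
    fun _ h => csInf_le ⟨0, fun _ h => h.1⟩ h⟩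

theorem hasDerivAt_artanh {x : ℝ} (hx : x ∈ Ioo (-1) 1) :
    HasDerivAt artanh (1 / (1 - x ^ 2)) x := by
  have h1 : 0 < 1 + x := by linarith [hx.1]
  have h2 : 0 < 1 - x := by linarith [hx.2]
  have hq := ((hasDerivAt_id x).const_add 1).div ((hasDerivAt_id x).const_sub 1) h2.ne'
  refine ((hq.log (div_pos h1 h2).ne').const_mul (1 / 2)).congr_deriv ?_
  simp only [id, Pi.div_apply]
  rw [show 1 - x ^ 2 = (1 + x) * (1 - x) by ring]
  field_simp
  ring

theorem artanh_nonneg {x : ℝ} (hx : x ∈ Ico 0 1) : 0 ≤ artanh x := by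
  have h2 : 0 < 1 - x := by linarith [hx.2]
  refine mul_nonneg (by norm_num) (Real.log_nonneg ?_)
  rw [le_div_iff₀ h2]
  linarith [hx.1]

theorem artanh_le_div_one_sub {x : ℝ} (hx : x ∈ Ico 0 1) : artanh x ≤ x / (1 - x) := by
  have h1 : 0 < 1 + x := by linarith [hx.1]
  have h2 : 0 < 1 - x := by linarith [hx.2]
  calc artanh x ≤ 1 / 2 * ((1 + x) / (1 - x) - 1) := by
        unfold artanh
        gcongr
        exact Real.log_le_sub_one_of_pos (div_pos h1 h2)
    _ = x / (1 - x) := by field_simp; ring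

noncomputable def depth (μ k : ℝ) : ℝ := artanh (μ / k) / k

section Depth

variable {μ k : ℝ}

theorem div_mem_Ico_of_lt (hμ : 0 < μ) (hk : μ < k) : μ / k ∈ Ico 0 1 :=
  ⟨div_nonneg hμ.le (hμ.trans hk).le, (div_lt_one (hμ.trans hk)).2 hk⟩

theorem hasDerivAt_depth (hμ : 0 < μ) (hk : μ < k) :
    HasDerivAt (depth μ) (-(μ / (k * (k ^ 2 - μ ^ 2)) + artanh (μ / k) / k ^ 2)) k := by
  have hk0 : k ≠ 0 := (hμ.trans hk).ne'
  have hx := div_mem_Ico_of_lt hμ hk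
  have hinner : HasDerivAt (fun k : ℝ => μ / k) (-μ / k ^ 2) k := by
    simpa [div_eq_mul_inv] using (hasDerivAt_inv hk0).const_mul μ
  have h := ((hasDerivAt_artanh ⟨by linarith [hx.1], hx.2⟩).comp k hinner).div (hasDerivAt_id k) hk0
  refine h.congr_deriv ?_
  simp only [id, Function.comp_apply]
  field_simp
  ring

theorem div_le_abs_deriv_depth (hμ : 0 < μ) (hk : μ < k) :
    μ / (k * (k ^ 2 - μ ^ 2)) ≤ |-(μ / (k * (k ^ 2 - μ ^ 2)) + artanh (μ / k) / k ^ 2)| := by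
  have := artanh_nonneg (div_mem_Ico_of_lt hμ hk)
  refine le_abs.2 (Or.inr ?_)
  rw [neg_neg]
  exact le_add_of_nonneg_right (by positivity)

theorem abs_deriv_depth_le (hμ : 0 < μ) (hk : μ < k) :
    |-(μ / (k * (k ^ 2 - μ ^ 2)) + artanh (μ / k) / k ^ 2)| ≤ 2 / (k * (k - μ)) := by
  have hk0 : 0 < k := hμ.trans hk
  have hkμ : 0 < k - μ := by linarith
  have hx := div_mem_Ico_of_lt hμ hk
  have hartanh : artanh (μ / k) / k ^ 2 ≤ μ / (k * k * (k - μ)) := by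
    calc artanh (μ / k) / k ^ 2 ≤ μ / k / (1 - μ / k) / k ^ 2 := by
          gcongr; exact artanh_le_div_one_sub hx
      _ = μ / (k * k * (k - μ)) := by field_simp
  have hrat : μ / (k * (k ^ 2 - μ ^ 2)) ≤ μ / (k * k * (k - μ)) := by
    rw [show k * (k ^ 2 - μ ^ 2) = k * (k + μ) * (k - μ) by ring]
    gcongr; linarith
  have hμk : μ / (k * k * (k - μ)) ≤ 1 / (k * (k - μ)) := by
    rw [div_le_div_iff₀ (by positivity) (by positivity)]
    nlinarith [mul_pos hk0 hkμ]
  have hsq : 0 < k ^ 2 - μ ^ 2 := by nlinarith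
  rw [abs_neg, abs_of_nonneg (by have := artanh_nonneg hx; positivity)]
  linarith [show 2 / (k * (k - μ)) = 2 * (1 / (k * (k - μ))) by ring]

end Depth

section Lipschitz

variable {μ a : ℝ}

theorem lipschitzOnWith_depth (hμ : 0 < μ) (ha : μ < a) :
    LipschitzOnWith (2 / (a * (a - μ))).toNNReal (depth μ) (Ici a) := by
  refine (convex_Ici a).lipschitzOnWith_of_nnnorm_hasDerivWithin_le
    (fun k hk => (hasDerivAt_depth hμ (ha.trans_le hk)).hasDerivWithinAt) ?_
  intro k (hk : a ≤ k)
  have ha0 : 0 < a := hμ.trans ha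
  have haμ : 0 < a - μ := by linarith
  rw [← NNReal.coe_le_coe, coe_nnnorm, Real.norm_eq_abs, Real.coe_toNNReal _ (by positivity)]
  calc _ ≤ 2 / (k * (k - μ)) := abs_deriv_depth_le hμ (ha.trans_le hk)
    _ ≤ 2 / (a * (a - μ)) := by gcongr; linarith

theorem div_le_of_lipschitzOnWith_depth (hμ : 0 < μ) (ha : μ < a) {m : ℝ} (hm : 0 ≤ m)
    (hf : LipschitzOnWith m.toNNReal (depth μ) (Ici a)) :
    μ / (a * (a ^ 2 - μ ^ 2)) ≤ m := by
  have hderiv : ∀ k ∈ Ioi a, μ / (k * (k ^ 2 - μ ^ 2)) ≤ m := fun k (hk : a < k) => by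
    have hμk := ha.trans hk
    calc μ / (k * (k ^ 2 - μ ^ 2)) ≤ ‖deriv (depth μ) k‖ := by
          rw [(hasDerivAt_depth hμ hμk).deriv, Real.norm_eq_abs]
          exact div_le_abs_deriv_depth hμ hμk
      _ ≤ m := by
          simpa [Real.coe_toNNReal _ hm] using norm_deriv_le_of_lipschitzOn (Ici_mem_nhds hk) hf
  have hcont : ContinuousAt (fun k : ℝ => μ / (k * (k ^ 2 - μ ^ 2))) a :=
    continuousAt_const.div (by fun_prop) (mul_pos (hμ.trans ha) (by nlinarith)).ne'
  exact le_of_tendsto (hcont.tendsto.mono_left nhdsWithin_le_nhds)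
    (eventually_nhdsWithin_of_forall hderiv)

end Lipschitz

/-- For `μ, α > 0`, `d(k) = artanh(μ/k)/k` is Lipschitz on `[μ+α, ∞)` and its (best)
Lipschitz constant `M` satisfies `μ/(2(μ+α)²α) ≤ M ≤ 3/((μ+α)α)`. -/
theorem depth_lipschitzOnWith (μ α : ℝ) (hμ : 0 < μ) (hα : 0 < α) :
    ∃ M : ℝ, 0 ≤ M ∧
      LipschitzOnWith M.toNNReal (fun k : ℝ => artanh (μ / k) / k) (Set.Ici (μ + α)) ∧
      (∀ M' : ℝ, 0 ≤ M' →
        LipschitzOnWith M'.toNNReal (fun k : ℝ => artanh (μ / k) / k) (Set.Ici (μ + α)) →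
        M ≤ M') ∧
      μ / (2 * (μ + α) ^ 2 * α) ≤ M ∧ M ≤ 3 / ((μ + α) * α) := by
  have hμα : μ < μ + α := by linarith
  have hupper : LipschitzOnWith (3 / ((μ + α) * α)).toNNReal (depth μ) (Ici (μ + α)) := by
    refine (lipschitzOnWith_depth hμ hμα).weaken (Real.toNNReal_le_toNNReal ?_)
    rw [add_sub_cancel_left]
    gcongr
    norm_num
  obtain ⟨M, ⟨hM0, hM⟩, hleast⟩ := hupper.exists_isLeast_lipschitzOnWith
  refine ⟨M, hM0, hM, fun M' hM'0 hM' => hleast ⟨hM'0, hM'⟩, ?_,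
    hleast ⟨by positivity, hupper⟩⟩
  calc μ / (2 * (μ + α) ^ 2 * α) ≤ μ / ((μ + α) * ((μ + α) ^ 2 - μ ^ 2)) := by
        refine div_le_div_of_nonneg_left hμ.le (mul_pos (by positivity) (by nlinarith)) ?_
        nlinarith [mul_pos (mul_pos hα hα) (add_pos hμ hα)]
    _ ≤ M := div_le_of_lipschitzOnWith_depth hμ hμα hM0 hM
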